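/- arXiv:1906.11791 — 4 statements merged into one kernel-verified Lean document; each statement's English description precedes it below -/
import Mathlib

section
/- Let a : [0,∞) → [0,∞) be a C¹ function with a(0)=0 such that a₀ ≤ t·a'(t)/a(t) ≤ a₁ for all t > 0, where a₀, a₁ > 0. Then for all ξ, ζ ∈ ℝ² \ {0} with ξ ≠ ζ, we have ((a(|ξ|)/|ξ|)·ξ − (a(|ζ|)/|ζ|)·ζ) · (ξ − ζ) > 0. -/
open RealInnerProductSpace

/-- Strict monotonicity of the A-Laplacian vector field:
for a C¹ function `a : [0,∞) → [0,∞)` with `a 0 = 0` and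
`a₀ ≤ t a'(t)/a(t) ≤ a₁` for `t > 0`, one has
`((a(|ξ|)/|ξ|)ξ − (a(|ζ|)/|ζ|)ζ) · (ξ − ζ) > 0` for distinct nonzero `ξ, ζ ∈ ℝ²`. -/
theorem stmt_0 (a a' : ℝ → ℝ) (a₀ a₁ : ℝ)
    (ha₀ : 0 < a₀) (ha₀₁ : a₀ ≤ a₁)
    (hnonneg : ∀ t, 0 ≤ t → 0 ≤ a t) (ha00 : a 0 = 0)
    (hderiv : ∀ t, 0 ≤ t → HasDerivWithinAt a (a' t) (Set.Ici 0) t)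
    (hcont : ContinuousOn a' (Set.Ici 0))
    (hlow : ∀ t, 0 < t → a₀ ≤ t * a' t / a t)
    (hhigh : ∀ t, 0 < t → t * a' t / a t ≤ a₁)
    (ξ ζ : EuclideanSpace ℝ (Fin 2)) (hξ : ξ ≠ 0) (hζ : ζ ≠ 0) (hne : ξ ≠ ζ) :
    0 < ⟪(a ‖ξ‖ / ‖ξ‖) • ξ - (a ‖ζ‖ / ‖ζ‖) • ζ, ξ - ζ⟫ := by
  have hapos : ∀ t, 0 < t → 0 < a t := by
    intro t ht
    rcases lt_or_eq_of_le (hnonneg t ht.le) with h | h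
    · exact h
    · exfalso
      have h2 := hlow t ht
      rw [← h] at h2
      simp at h2
      linarith
  have hcontA : ContinuousOn a (Set.Ici 0) :=
    fun t ht => (hderiv t ht).continuousWithinAt
  have hmono : StrictMonoOn a (Set.Ici 0) := by
    apply strictMonoOn_of_deriv_pos (convex_Ici 0) hcontA
    intro t ht
    rw [interior_Ici] at ht
    have ht' : (0:ℝ) < t := ht
    have hd : HasDerivAt a (a' t) t :=
      (hderiv t ht'.le).hasDerivAt (Ici_mem_nhds ht')
    rw [hd.deriv]
    have hA := hapos t ht'
    have h2 := hlow t ht'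
    have h1 : a₀ * a t ≤ t * a' t := by
      rwa [le_div_iff₀ hA] at h2
    nlinarith
  set s := ‖ξ‖ with hs
  set t := ‖ζ‖ with ht
  have hspos : 0 < s := norm_pos_iff.mpr hξ
  have htpos : 0 < t := norm_pos_iff.mpr hζ
  have hAs := hapos s hspos
  have hAt := hapos t htpos
  have hc : 0 < a s / s := div_pos hAs hspos
  have hd : 0 < a t / t := div_pos hAt htpos
  have hp : ⟪ξ, ζ⟫ ≤ s * t := real_inner_le_norm ξ ζ
  have hexp : ⟪(a s / s) • ξ - (a t / t) • ζ, ξ - ζ⟫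
      = (a s / s) * s^2 + (a t / t) * t^2 - (a s / s + a t / t) * ⟪ξ, ζ⟫ := by
    simp only [inner_sub_left, inner_sub_right, real_inner_smul_left,
      real_inner_self_eq_norm_sq, real_inner_comm ζ ξ]
    ring
  rw [hexp]
  rcases eq_or_ne s t with hst | hst
  · have h2 : (0:ℝ) < ‖ξ - ζ‖^2 :=
      pow_pos (norm_pos_iff.mpr (sub_ne_zero.mpr hne)) 2
    have h3 : ‖ξ - ζ‖^2 = s^2 + t^2 - 2 * ⟪ξ, ζ⟫ := by
      rw [← real_inner_self_eq_norm_sq]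
      simp only [inner_sub_left, inner_sub_right, real_inner_self_eq_norm_sq,
        real_inner_comm ζ ξ]
      ring
    have hlt : ⟪ξ, ζ⟫ < s * t := by nlinarith
    have hcd : a s / s = a t / t := by rw [hst]
    nlinarith [mul_pos hc (sub_pos.mpr hlt)]
  · have hmain : 0 < (s - t) * (a s - a t) := by
      rcases hst.lt_or_gt with h | h
      · have := hmono hspos.le htpos.le h
        nlinarith
      · have := hmono htpos.le hspos.le h
        nlinarith
    have heq : (s - t) * (a s - a t)
        = (a s / s) * s^2 + (a t / t) * t^2 - (a s / s + a t / t) * (s*t) := by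
      field_simp
      ring
    nlinarith [mul_le_mul_of_nonneg_left hp (le_of_lt (add_pos hc hd))]
end

section
/- Let H = (H₁, H₂) : Ω̄ → ℝ² be Lipschitz continuous with 0 < h̲ ≤ H₂ ≤ h̄ and |H₁| ≤ h̄ on a bounded open set Ω ⊂ ℝ². Fix h in the projection of Ω onto the x₂-axis and let X(·, w) denote the maximal solution of X' = H(X), X(0) = (w, h). For k in π_{x₂}(Ω), let t_k(w) be the unique time (when it exists) at which the orbit of X(·, w) meets the line {x₂ = k}. Then the function S(k, w) = t_k(w) is Lipschitz on its domain: there is a constant C > 0 with |S(k,w) − S(k₀,w₀)| ≤ C(|k − k₀| + |w − w₀|) for all (k,w), (k₀,w₀) in the domain of S. -/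
/-!
Because `H₂ ≥ hm > 0`, the height `x₂` increases at rate at least `hm` along every orbit, so an
orbit spends time at most `diam Ω / hm` in `Ω`, and on one orbit the hitting times of levels `k`
and `k₀` differ by at most `|k - k₀| / hm`. By Grönwall's inequality the orbits through `(w, h)` and
`(w₀, h)` stay within `|w - w₀| exp (K diam Ω / hm)` of each other over such times, and a height
discrepancy of that size shifts a hitting time by at most its size divided by `hm`.
-/

open Set Real Metric

open scoped NNReal

section Gronwall

variable {E : Type*} [NormedAddCommGroup E] [NormedSpace ℝ E] {v : E → E} {s : Set E} {K : ℝ≥0}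
  {f g : ℝ → E} {a t : ℝ}

theorem dist_le_mul_exp_of_trajectories_of_le (hv : LipschitzOnWith K v s) (hat : a ≤ t)
    (hf : ∀ r ∈ Icc a t, f r ∈ s ∧ HasDerivAt f (v (f r)) r)
    (hg : ∀ r ∈ Icc a t, g r ∈ s ∧ HasDerivAt g (v (g r)) r) :
    dist (f t) (g t) ≤ dist (f a) (g a) * exp (K * (t - a)) :=
  dist_le_of_trajectories_ODE_of_mem (v := fun _ => v) (s := fun _ => s) (fun _ _ => hv)
    (fun r hr => (hf r hr).2.continuousAt.continuousWithinAt)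
    (fun r hr => (hf r (Ico_subset_Icc_self hr)).2.hasDerivWithinAt)
    (fun r hr => (hf r (Ico_subset_Icc_self hr)).1)
    (fun r hr => (hg r hr).2.continuousAt.continuousWithinAt)
    (fun r hr => (hg r (Ico_subset_Icc_self hr)).2.hasDerivWithinAt)
    (fun r hr => (hg r (Ico_subset_Icc_self hr)).1) le_rfl t ⟨hat, le_rfl⟩

/-- Running time backwards turns a trajectory of `v` into one of `-v`, so Grönwall's bound holds
in both time directions. -/
theorem dist_le_mul_exp_abs_of_trajectories (hv : LipschitzOnWith K v s)
    (hf : ∀ r ∈ uIcc a t, f r ∈ s ∧ HasDerivAt f (v (f r)) r)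
    (hg : ∀ r ∈ uIcc a t, g r ∈ s ∧ HasDerivAt g (v (g r)) r) :
    dist (f t) (g t) ≤ dist (f a) (g a) * exp (K * |t - a|) := by
  rcases le_total a t with hat | hta
  · rw [uIcc_of_le hat] at hf hg
    rw [abs_of_nonneg (sub_nonneg.mpr hat)]
    exact dist_le_mul_exp_of_trajectories_of_le hv hat hf hg
  · rw [uIcc_of_ge hta] at hf hg
    have hv' : LipschitzOnWith K (fun x => -v x) s := fun x hx y hy => by
      simpa only [edist_neg_neg] using hv hx hy
    have reverse : ∀ φ : ℝ → E, (∀ r ∈ Icc t a, φ r ∈ s ∧ HasDerivAt φ (v (φ r)) r) →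
        ∀ r ∈ Icc (-a) (-t), φ (-r) ∈ s ∧ HasDerivAt (fun r => φ (-r)) (-v (φ (-r))) r := by
      intro φ hφ r hr
      have hr' : -r ∈ Icc t a := ⟨le_neg.mpr hr.2, neg_le.mpr hr.1⟩
      refine ⟨(hφ _ hr').1, ?_⟩
      simpa [Function.comp_def] using (hφ _ hr').2.scomp r (hasDerivAt_neg r)
    have := dist_le_mul_exp_of_trajectories_of_le hv' (neg_le_neg hta) (reverse f hf) (reverse g hg)
    rw [abs_of_nonpos (sub_nonpos.mpr hta), neg_sub]
    simpa only [neg_neg, neg_sub_neg] using this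

end Gronwall

section IncreasingHeight

variable {H : ℝ × ℝ → ℝ × ℝ} {Ω : Set (ℝ × ℝ)} {m : ℝ} {γ : ℝ → ℝ × ℝ} {α β : ℝ}

theorem mul_sub_le_snd_sub_of_trajectory (hH : ∀ x ∈ Ω, m ≤ (H x).2)
    (hγ : ∀ r ∈ Ioo α β, γ r ∈ Ω ∧ HasDerivAt γ (H (γ r)) r) {s u : ℝ}
    (hs : s ∈ Ioo α β) (hu : u ∈ Ioo α β) (hsu : s ≤ u) :
    m * (u - s) ≤ (γ u).2 - (γ s).2 := by
  have hsnd : ∀ r ∈ Ioo α β, HasDerivAt (fun r => (γ r).2) (H (γ r)).2 r := fun r hr => by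
    simpa [Function.comp_def] using
      (ContinuousLinearMap.snd ℝ ℝ ℝ).hasFDerivAt.comp_hasDerivAt r (hγ r hr).2
  refine (convex_Ioo α β).mul_sub_le_image_sub_of_le_deriv
    (fun r hr => (hsnd r hr).continuousAt.continuousWithinAt) ?_ ?_ s hs u hu hsu
  · rw [interior_Ioo]
    exact fun r hr => (hsnd r hr).differentiableAt.differentiableWithinAt
  · rw [interior_Ioo]
    intro r hr
    rw [(hsnd r hr).deriv]
    exact hH _ (hγ r hr).1

theorem abs_snd_sub_le_dist (x y : ℝ × ℝ) : |x.2 - y.2| ≤ dist x y := by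
  rw [← Real.dist_eq, Prod.dist_eq]
  exact le_max_right _ _

theorem abs_sub_le_diam_div_of_trajectory (hΩ : Bornology.IsBounded Ω) (hm : 0 < m)
    (hH : ∀ x ∈ Ω, m ≤ (H x).2) (hγ : ∀ r ∈ Ioo α β, γ r ∈ Ω ∧ HasDerivAt γ (H (γ r)) r)
    {s u : ℝ} (hs : s ∈ Ioo α β) (hu : u ∈ Ioo α β) : |u - s| ≤ diam Ω / m := by
  wlog hsu : s ≤ u generalizing s u
  · rw [abs_sub_comm]
    exact this hu hs (le_of_not_ge hsu)
  rw [abs_of_nonneg (sub_nonneg.mpr hsu), le_div_iff₀' hm]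
  calc m * (u - s) ≤ (γ u).2 - (γ s).2 := mul_sub_le_snd_sub_of_trajectory hH hγ hs hu hsu
    _ ≤ dist (γ u) (γ s) := (le_abs_self _).trans (abs_snd_sub_le_dist _ _)
    _ ≤ diam Ω := dist_le_diam_of_mem hΩ (hγ u hu).1 (hγ s hs).1

/-- The trajectories are compared at the time `τ` in `[t₀, t]` closest to `0`: both are defined
on the whole interval between `0` and `τ`, so Grönwall applies there, while monotonicity of the
height covers `[τ, t]` along `γ` and `[t₀, τ]` along `γ₀`. -/
theorem mul_sub_le_of_trajectories {K : ℝ≥0} (hHlip : LipschitzOnWith K H Ω)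
    (hH : ∀ x ∈ Ω, m ≤ (H x).2) {γ₀ : ℝ → ℝ × ℝ} {α₀ β₀ : ℝ}
    (hγ : ∀ r ∈ Ioo α β, γ r ∈ Ω ∧ HasDerivAt γ (H (γ r)) r)
    (hγ₀ : ∀ r ∈ Ioo α₀ β₀, γ₀ r ∈ Ω ∧ HasDerivAt γ₀ (H (γ₀ r)) r)
    (h0 : (0 : ℝ) ∈ Ioo α β) (h0₀ : (0 : ℝ) ∈ Ioo α₀ β₀) {t t₀ : ℝ}
    (ht : t ∈ Ioo α β) (ht₀ : t₀ ∈ Ioo α₀ β₀) (hle : t₀ ≤ t) :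
    m * (t - t₀) ≤ (γ t).2 - (γ₀ t₀).2 + dist (γ 0) (γ₀ 0) * exp (K * |t|) := by
  set τ := max t₀ (min 0 t)
  have hτt₀ : t₀ ≤ τ := le_max_left _ _
  have hτt : τ ≤ t := max_le hle (min_le_right _ _)
  have hτ : uIcc 0 τ ⊆ uIcc 0 t := by
    rw [uIcc_subset_uIcc_iff_mem]
    exact ⟨left_mem_uIcc, by grind [mem_uIcc]⟩
  have hτ₀ : uIcc 0 τ ⊆ uIcc 0 t₀ := by
    rw [uIcc_subset_uIcc_iff_mem]
    exact ⟨left_mem_uIcc, by grind [mem_uIcc]⟩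
  have hsub : uIcc 0 τ ⊆ Ioo α β := hτ.trans (ordConnected_Ioo.uIcc_subset h0 ht)
  have hsub₀ : uIcc 0 τ ⊆ Ioo α₀ β₀ := hτ₀.trans (ordConnected_Ioo.uIcc_subset h0₀ ht₀)
  have hτI : τ ∈ Ioo α β := hsub right_mem_uIcc
  have hτI₀ : τ ∈ Ioo α₀ β₀ := hsub₀ right_mem_uIcc
  have hgap : (γ₀ τ).2 - (γ τ).2 ≤ dist (γ 0) (γ₀ 0) * exp (K * |t|) :=
    calc (γ₀ τ).2 - (γ τ).2 ≤ dist (γ τ) (γ₀ τ) := by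
          rw [dist_comm]; exact (le_abs_self _).trans (abs_snd_sub_le_dist _ _)
      _ ≤ dist (γ 0) (γ₀ 0) * exp (K * |τ|) := by
          simpa using dist_le_mul_exp_abs_of_trajectories hHlip (fun r hr => hγ r (hsub hr))
            (fun r hr => hγ₀ r (hsub₀ hr))
      _ ≤ dist (γ 0) (γ₀ 0) * exp (K * |t|) := by
          gcongr ?_ * exp (_ * ?_)
          simpa using abs_sub_le_of_uIcc_subset_uIcc hτ
  linarith [mul_sub_le_snd_sub_of_trajectory hH hγ hτI ht hτt,
    mul_sub_le_snd_sub_of_trajectory hH hγ₀ ht₀ hτI₀ hτt₀]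

end IncreasingHeight

theorem stmt_4_general (Ω : Set (ℝ × ℝ)) (hΩb : Bornology.IsBounded Ω)
    (H : ℝ × ℝ → ℝ × ℝ) (K : NNReal) (hHlip : LipschitzOnWith K H (closure Ω))
    (hm hM : ℝ) (hm_pos : 0 < hm)
    (hH2 : ∀ x ∈ Ω, hm ≤ (H x).2 ∧ (H x).2 ≤ hM)
    (h : ℝ) (αm αp : ℝ → ℝ) (X : ℝ → ℝ → ℝ × ℝ)
    (W : Set ℝ)
    (hdom : ∀ w ∈ W, αm w < 0 ∧ 0 < αp w)
    (hinit : ∀ w ∈ W, X 0 w = (w, h))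
    (hODE : ∀ w ∈ W, ∀ t ∈ Set.Ioo (αm w) (αp w),
      X t w ∈ Ω ∧ HasDerivAt (fun s => X s w) (H (X t w)) t)
    (domS : Set (ℝ × ℝ)) (S : ℝ → ℝ → ℝ)
    (hS : ∀ k w, (k, w) ∈ domS →
      w ∈ W ∧ S k w ∈ Set.Ioo (αm w) (αp w) ∧ (X (S k w) w).2 = k) :
    ∃ C > 0, ∀ k w k₀ w₀, (k, w) ∈ domS → (k₀, w₀) ∈ domS →
      |S k w - S k₀ w₀| ≤ C * (|k - k₀| + |w - w₀|) := by
  have hHm : ∀ x ∈ Ω, hm ≤ (H x).2 := fun x hx => (hH2 x hx).1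
  set E := exp (K * (diam Ω / hm))
  have hE : 1 ≤ E := one_le_exp (by positivity)
  have hordered : ∀ k w k₀ w₀, (k, w) ∈ domS → (k₀, w₀) ∈ domS → S k₀ w₀ ≤ S k w →
      S k w - S k₀ w₀ ≤ E / hm * (|k - k₀| + |w - w₀|) := by
    intro k w k₀ w₀ hkw hkw₀ hle
    obtain ⟨hw, ht, hk⟩ := hS k w hkw
    obtain ⟨hw₀, ht₀, hk₀⟩ := hS k₀ w₀ hkw₀
    have hT : |S k w| ≤ diam Ω / hm := by
      simpa using abs_sub_le_diam_div_of_trajectory hΩb hm_pos hHm (hODE w hw) (hdom w hw) ht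
    have key := mul_sub_le_of_trajectories (hHlip.mono subset_closure) hHm (hODE w hw)
      (hODE w₀ hw₀) (hdom w hw) (hdom w₀ hw₀) ht ht₀ hle
    have hdist : dist (X 0 w) (X 0 w₀) = |w - w₀| := by
      simp [hinit w hw, hinit w₀ hw₀, Prod.dist_eq, Real.dist_eq]
    rw [hk, hk₀, hdist] at key
    have hexp : exp (K * |S k w|) ≤ E := exp_le_exp.mpr (by gcongr)
    rw [div_mul_eq_mul_div, le_div_iff₀' hm_pos]
    nlinarith [abs_nonneg (w - w₀), le_abs_self (k - k₀), abs_nonneg (k - k₀)]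
  refine ⟨E / hm, by positivity, fun k w k₀ w₀ hkw hkw₀ => abs_sub_le_iff.mpr ?_⟩
  have hC : 0 ≤ E / hm * (|k - k₀| + |w - w₀|) := by positivity
  rcases le_total (S k₀ w₀) (S k w) with hle | hle
  · exact ⟨hordered k w k₀ w₀ hkw hkw₀ hle, by linarith⟩
  · refine ⟨by linarith, ?_⟩
    simpa only [abs_sub_comm] using hordered k₀ w₀ k w hkw₀ hkw hle

/-- Lipschitz continuity of the hitting-time function `S(k,w) = t_k(w)` for the flow
of `X' = H(X)`, `X(0) = (w,h)`, where `H` is Lipschitz with `0 < hm ≤ H₂ ≤ hM`, `|H₁| ≤ hM`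
on the bounded open set `Ω ⊂ ℝ²`. -/
theorem stmt_4 (Ω : Set (ℝ × ℝ)) (hΩo : IsOpen Ω) (hΩb : Bornology.IsBounded Ω)
    (H : ℝ × ℝ → ℝ × ℝ) (K : NNReal) (hHlip : LipschitzOnWith K H (closure Ω))
    (hm hM : ℝ) (hm_pos : 0 < hm)
    (hH1 : ∀ x ∈ Ω, |(H x).1| ≤ hM)
    (hH2 : ∀ x ∈ Ω, hm ≤ (H x).2 ∧ (H x).2 ≤ hM)
    (h : ℝ) (αm αp : ℝ → ℝ) (X : ℝ → ℝ → ℝ × ℝ)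
    (W : Set ℝ) (hW : W = {w : ℝ | (w, h) ∈ Ω})
    (hdom : ∀ w ∈ W, αm w < 0 ∧ 0 < αp w)
    (hinit : ∀ w ∈ W, X 0 w = (w, h))
    (hODE : ∀ w ∈ W, ∀ t ∈ Set.Ioo (αm w) (αp w),
      X t w ∈ Ω ∧ HasDerivAt (fun s => X s w) (H (X t w)) t)
    (domS : Set (ℝ × ℝ)) (S : ℝ → ℝ → ℝ)
    (hS : ∀ k w, (k, w) ∈ domS →
      w ∈ W ∧ S k w ∈ Set.Ioo (αm w) (αp w) ∧ (X (S k w) w).2 = k) :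
    ∃ C > 0, ∀ k w k₀ w₀, (k, w) ∈ domS → (k₀, w₀) ∈ domS →
      |S k w - S k₀ w₀| ≤ C * (|k - k₀| + |w - w₀|) :=
  stmt_4_general Ω hΩb H K hHlip hm hM hm_pos hH2 h αm αp X W hdom hinit hODE domS S hS
end

section
/- Let h̄ > 0, ε > 0, and let a : [0,∞) → [0,∞) be a strictly increasing continuous bijection onto [0,∞) (so a⁻¹ is well-defined). Define ϑ_ε(t) = ∫_0^t a⁻¹(2h̄ε − h̄s) ds for t ∈ [0, ε] and v̄_ε(x₁, x₂) = ϑ_ε(k + ε − x₂) on the strip {k < x₂ < k + ε}. Then v̄_ε satisfies Δ_A v̄_ε = −h̄ in the strip, i.e., div((a(|∇v̄_ε|)/|∇v̄_ε|)·∇v̄_ε) = −h̄ wherever ∇v̄_ε ≠ 0. -/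
/-!
On the strip, `∇v̄_ε = -a⁻¹(h̄ε + h̄(x₂ - k)) e₂` by the fundamental theorem of calculus, so the
flux `(a(|∇v̄_ε|)/|∇v̄_ε|) ∇v̄_ε` collapses to the affine field `-(h̄ε + h̄(x₂ - k)) e₂`, whose
divergence is `-h̄`. The fundamental theorem of calculus needs `a⁻¹` continuous on `(0, ∞)`, which
follows from monotonicity and surjectivity.
-/

open Set Filter Topology

section RightInverse

variable {a b : ℝ → ℝ}

theorem strictMonoOn_Ici_of_rightInverse (ha : MonotoneOn a (Ici 0))
    (hab : ∀ t, 0 ≤ t → a (b t) = t) (hb : ∀ t, 0 ≤ t → 0 ≤ b t) :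
    StrictMonoOn b (Ici 0) := by
  intro s hs t ht hst
  by_contra! hts
  have := ha (hb t ht) (hb s hs) hts
  rw [hab t ht, hab s hs] at this
  exact hst.not_ge this

theorem pos_of_rightInverse (ha0 : a 0 = 0) (hab : ∀ t, 0 ≤ t → a (b t) = t)
    (hb : ∀ t, 0 ≤ t → 0 ≤ b t) {t : ℝ} (ht : 0 < t) : 0 < b t := by
  refine (hb t ht.le).lt_of_ne fun h => ht.ne ?_
  rw [← hab t ht.le, ← h, ha0]

theorem continuousOn_Ioi_of_rightInverse (ha0 : a 0 = 0) (ha : StrictMonoOn a (Ici 0))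
    (hab : ∀ t, 0 ≤ t → a (b t) = t) (hba : ∀ t, 0 ≤ t → b (a t) = t)
    (hb : ∀ t, 0 ≤ t → 0 ≤ b t) : ContinuousOn b (Ioi 0) := by
  have hsurj : Ioi 0 ⊆ b '' Ioi 0 := fun u (hu : 0 < u) =>
    ⟨a u, by simpa [ha0] using ha self_mem_Ici hu.le hu, hba u hu.le⟩
  intro t ht
  refine ContinuousAt.continuousWithinAt ?_
  exact ((strictMonoOn_Ici_of_rightInverse ha.monotoneOn hab hb).mono Ioi_subset_Ici_self
    |>.continuousAt_of_image_mem_nhds (Ioi_mem_nhds ht)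
      (mem_of_superset (Ioi_mem_nhds (pos_of_rightInverse ha0 hab hb ht)) hsurj))

end RightInverse

theorem hasDerivAt_integral_of_continuousOn {φ : ℝ → ℝ} {U : Set ℝ} {a u : ℝ} (hU : IsOpen U)
    (hφ : ContinuousOn φ U) (hau : uIcc a u ⊆ U) :
    HasDerivAt (fun t => ∫ s in a..t, φ s) (φ u) u :=
  have hu : u ∈ U := hau right_mem_uIcc
  intervalIntegral.integral_hasDerivAt_right (hφ.mono hau).intervalIntegrable
    (hφ.stronglyMeasurableAtFilter hU u hu) (hφ.continuousAt (hU.mem_nhds hu))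

section EuclideanSpace

variable {ι : Type*} [Fintype ι] [DecidableEq ι] {f : ℝ → ℝ} {d : ℝ} {i : ι}

theorem hasGradientAt_comp_apply {y : EuclideanSpace ℝ ι} (hf : HasDerivAt f d (y i)) :
    HasGradientAt (fun x : EuclideanSpace ℝ ι => f (x i)) (d • EuclideanSpace.single i 1) y := by
  rw [hasGradientAt_iff_hasFDerivAt]
  refine (hf.comp_hasFDerivAt y (EuclideanSpace.proj (𝕜 := ℝ) i).hasFDerivAt).congr_fderiv ?_
  ext v
  simp [EuclideanSpace.inner_single_left]

theorem sum_fderiv_apply_single_of_eventuallyEq {F : EuclideanSpace ℝ ι → EuclideanSpace ℝ ι}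
    {x : EuclideanSpace ℝ ι} (hF : F =ᶠ[𝓝 x] fun y => f (y i) • EuclideanSpace.single i 1)
    (hf : HasDerivAt f d (x i)) :
    ∑ j, fderiv ℝ F x (EuclideanSpace.single j 1) j = d := by
  have hFd : HasFDerivAt (fun y : EuclideanSpace ℝ ι => f (y i) • EuclideanSpace.single i (1 : ℝ))
      _ x := (hf.comp_hasFDerivAt x (EuclideanSpace.proj (𝕜 := ℝ) i).hasFDerivAt).smul_const
    (EuclideanSpace.single i (1 : ℝ))
  rw [hF.fderiv_eq, hFd.fderiv]
  simp [apply_ite (fun v : EuclideanSpace ℝ ι => v _)]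

end EuclideanSpace

theorem div_norm_smul_neg_smul {E : Type*} [NormedAddCommGroup E] [NormedSpace ℝ E]
    (a : ℝ → ℝ) {r : ℝ} {e : E} (hr : 0 < r) (he : ‖e‖ = 1) :
    (a ‖-r • e‖ / ‖-r • e‖) • (-r • e) = -a r • e := by
  rw [norm_smul, he, mul_one, norm_neg, Real.norm_of_nonneg hr.le, smul_smul]
  congr 1
  field_simp

theorem hasGradientAt_barrier {b : ℝ → ℝ} {hM ε k : ℝ} (hb : ContinuousOn b (Ioi 0))
    (hM_pos : 0 < hM) {y : EuclideanSpace ℝ (Fin 2)} (hy1 : k < y 1) (hy2 : y 1 < k + ε) :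
    HasGradientAt (fun x : EuclideanSpace ℝ (Fin 2) =>
        ∫ s in (0:ℝ)..(k + ε - x 1), b (2 * hM * ε - hM * s))
      (-b (hM * ε + hM * (y 1 - k)) • EuclideanSpace.single 1 1) y := by
  have hφ : ContinuousOn (fun s => b (2 * hM * ε - hM * s)) (Iio (2 * ε)) :=
    hb.comp (by fun_prop) fun s (hs : s < 2 * ε) => by simp only [mem_Ioi]; nlinarith
  have hθ := hasDerivAt_integral_of_continuousOn (a := 0) (u := k + ε - y 1) isOpen_Iio hφ
    fun s hs => by rw [uIcc_of_le (by linarith)] at hs; exact hs.2.trans_lt (by linarith)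
  convert hasGradientAt_comp_apply (i := 1)
    (f := fun t => ∫ s in (0:ℝ)..(k + ε - t), b (2 * hM * ε - hM * s))
    (hθ.comp (y 1) ((hasDerivAt_id _).const_sub _)) using 2
  rw [mul_neg_one, show 2 * hM * ε - hM * (k + ε - y 1) = hM * ε + hM * (y 1 - k) by ring]

theorem stmt_6_general (a b : ℝ → ℝ) (hM ε k : ℝ) (hM_pos : 0 < hM)
    (ha00 : a 0 = 0) (hamono : StrictMonoOn a (Set.Ici 0))
    (hinv : ∀ t, 0 ≤ t → a (b t) = t ∧ b (a t) = t ∧ 0 ≤ b t)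
    (vbar : EuclideanSpace ℝ (Fin 2) → ℝ)
    (hvbar : vbar = fun x => ∫ s in (0:ℝ)..(k + ε - x 1), b (2 * hM * ε - hM * s)) :
    ∀ x : EuclideanSpace ℝ (Fin 2), k < x 1 → x 1 < k + ε →
      (∑ i : Fin 2,
        fderiv ℝ
          (fun y => (a ‖gradient vbar y‖ / ‖gradient vbar y‖) • gradient vbar y) x
          (EuclideanSpace.single i 1) i) = -hM := by
  intro x hx1 hx2
  have hab t ht := (hinv t ht).1
  have hb t ht := (hinv t ht).2.2
  have hb_cont := continuousOn_Ioi_of_rightInverse ha00 hamono hab (fun t ht => (hinv t ht).2.1) hb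
  have hstrip : {y : EuclideanSpace ℝ (Fin 2) | k < y 1 ∧ y 1 < k + ε} ∈ 𝓝 x :=
    (isOpen_Ioo.preimage (EuclideanSpace.proj 1).continuous).mem_nhds ⟨hx1, hx2⟩
  have hflux : HasDerivAt (fun t => -(hM * ε + hM * (t - k))) (-hM) (x 1) :=
    ((((hasDerivAt_id (x 1)).sub_const k).const_mul hM).const_add (hM * ε)).neg.congr_deriv
      (by ring)
  refine sum_fderiv_apply_single_of_eventuallyEq (i := 1) ?_ hflux
  filter_upwards [hstrip] with y ⟨hy1, hy2⟩
  have harg : 0 < hM * ε + hM * (y 1 - k) := by nlinarith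
  rw [hvbar, (hasGradientAt_barrier hb_cont hM_pos hy1 hy2).gradient,
    div_norm_smul_neg_smul a (pos_of_rightInverse ha00 hab hb harg) (by simp), hab _ harg.le]

/-- The barrier `v̄_ε(x) = ϑ_ε(k + ε − x₂)`, with `ϑ_ε(t) = ∫_0^t a⁻¹(2hMε − hM s) ds`,
satisfies `Δ_A v̄_ε = −hM` in the strip `{k < x₂ < k + ε}`, i.e. the divergence of the
flux `(a(|∇v̄_ε|)/|∇v̄_ε|) ∇v̄_ε` equals `−hM` there. Here `b = a⁻¹`. -/
theorem stmt_6 (a b : ℝ → ℝ) (hM ε k : ℝ) (hM_pos : 0 < hM) (hε : 0 < ε)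
    (ha00 : a 0 = 0) (hamono : StrictMonoOn a (Set.Ici 0))
    (haC1 : ContDiffOn ℝ 1 a (Set.Ici 0))
    (hann : ∀ t, 0 ≤ t → 0 ≤ a t)
    (hinv : ∀ t, 0 ≤ t → a (b t) = t ∧ b (a t) = t ∧ 0 ≤ b t)
    (vbar : EuclideanSpace ℝ (Fin 2) → ℝ)
    (hvbar : vbar = fun x => ∫ s in (0:ℝ)..(k + ε - x 1), b (2 * hM * ε - hM * s)) :
    ∀ x : EuclideanSpace ℝ (Fin 2), k < x 1 → x 1 < k + ε →
      (∑ i : Fin 2,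
        fderiv ℝ
          (fun y => (a ‖gradient vbar y‖ / ‖gradient vbar y‖) • gradient vbar y) x
          (EuclideanSpace.single i 1) i) = -hM :=
  stmt_6_general a b hM ε k hM_pos ha00 hamono hinv vbar hvbar
end

section
/- Let H : Ω̄ → ℝ² be Lipschitz on a bounded open Ω with 0 < h̲ ≤ H₂ ≤ h̄, and let X(·, w) be the maximal solution of X' = H(X), X(0) = (w, h) defined on (α₋(w), α₊(w)). Then the limits lim_{t → α₊(w)⁻} X(t, w) and lim_{t → α₋(w)⁺} X(t, w) exist, and they belong to ∂Ω ∩ {x₂ > h} and ∂Ω ∩ {x₂ < h} respectively. -/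
/-!
Since `‖H‖ ≤ hM` on `Ω`, the solution is `hM`-Lipschitz on the bounded interval `(αm, αp)`,
hence uniformly continuous, so it has limits at both endpoints. A limit lying in `Ω` would let
us continue the solution past the endpoint: solve the ODE from the limit point by
Picard–Lindelöf and glue, the one-sided derivatives at the junction agreeing by continuity of `H`.
By maximality the limits are therefore on `∂Ω`. Finally `X₂` is strictly increasing because
`H₂ ≥ hm > 0`, which puts the two limits above and below the line `x₂ = h`.
-/

open Set Filter Topology Metric

theorem UniformContinuousOn.exists_tendsto_nhdsWithin {α β : Type*} [UniformSpace α]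
    [UniformSpace β] [CompleteSpace β] {f : α → β} {s : Set α} (hf : UniformContinuousOn f s)
    {a : α} (ha : a ∈ closure s) : ∃ p, Tendsto f (𝓝[s] a) (𝓝 p) :=
  haveI := mem_closure_iff_nhdsWithin_neBot.1 ha
  cauchy_map_iff_exists_tendsto.1 <|
    (cauchy_nhds.mono nhdsWithin_le_nhds).map_of_le hf inf_le_right

theorem StrictMonoOn.lt_of_tendsto_nhdsLT {β : Type*} [LinearOrder β] [TopologicalSpace β]
    [OrderClosedTopology β] {f : ℝ → β} {a b t : ℝ} {l : β} (hf : StrictMonoOn f (Ioo a b))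
    (ht : t ∈ Ioo a b) (hl : Tendsto f (𝓝[<] b) (𝓝 l)) : f t < l := by
  obtain ⟨t', htt', ht'b⟩ := exists_between ht.2
  refine (hf ht ⟨ht.1.trans htt', ht'b⟩ htt').trans_le (ge_of_tendsto hl ?_)
  filter_upwards [Ioo_mem_nhdsLT ht'b] with s hs
  exact hf.monotoneOn ⟨ht.1.trans htt', ht'b⟩ ⟨(ht.1.trans htt').trans hs.1, hs.2⟩ hs.1.le

theorem StrictMonoOn.lt_of_tendsto_nhdsGT {β : Type*} [LinearOrder β] [TopologicalSpace β]
    [OrderClosedTopology β] {f : ℝ → β} {a b t : ℝ} {l : β} (hf : StrictMonoOn f (Ioo a b))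
    (ht : t ∈ Ioo a b) (hl : Tendsto f (𝓝[>] a) (𝓝 l)) : l < f t := by
  obtain ⟨t', hat', ht't⟩ := exists_between ht.1
  refine (le_of_tendsto hl ?_).trans_lt (hf ⟨hat', ht't.trans ht.2⟩ ht ht't)
  filter_upwards [Ioo_mem_nhdsGT hat'] with s hs
  exact hf.monotoneOn ⟨hs.1, hs.2.trans (ht't.trans ht.2)⟩ ⟨hat', ht't.trans ht.2⟩ hs.2.le

variable {E : Type*} [NormedAddCommGroup E] [NormedSpace ℝ E]

def SolvesODE (F : E → E) (U : Set E) (X : ℝ → E) (s : Set ℝ) : Prop :=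
  ∀ t ∈ s, X t ∈ U ∧ HasDerivAt X (F (X t)) t

theorem exists_solvesODE_of_lipschitzOnWith [CompleteSpace E] {F : E → E} {U : Set E}
    {K : NNReal} (hU : IsOpen U) (hF : LipschitzOnWith K F U) {x₀ : E} (hx₀ : x₀ ∈ U)
    (t₀ : ℝ) : ∃ Z : ℝ → E, Z t₀ = x₀ ∧ ∃ ε > 0, SolvesODE F U Z (Ioo (t₀ - ε) (t₀ + ε)) := by
  obtain ⟨a, ha, hball⟩ := nhds_basis_closedBall.mem_iff.1 (hU.mem_nhds hx₀)
  lift a to NNReal using ha.le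
  set L : NNReal := ‖F x₀‖₊ + K * a
  set ε : ℝ := a / (L + 1)
  have hε : 0 < ε := by positivity
  have hbound : ∀ x ∈ closedBall x₀ a, ‖F x‖ ≤ L := fun x hx => by
    calc ‖F x‖ ≤ ‖F x - F x₀‖ + ‖F x₀‖ := norm_le_norm_sub_add _ _
      _ ≤ K * ‖x - x₀‖ + ‖F x₀‖ := by gcongr; exact hF.norm_sub_le (hball hx) hx₀
      _ ≤ L := by
        have : ‖x - x₀‖ ≤ a := mem_closedBall_iff_norm.1 hx
        simp only [L, NNReal.coe_add, NNReal.coe_mul, coe_nnnorm]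
        nlinarith [K.2]
  have hPL : IsPicardLindelof (fun _ => F) (tmin := t₀ - ε) (tmax := t₀ + ε)
      ⟨t₀, by constructor <;> linarith⟩ x₀ a 0 L K := by
    refine .of_time_independent hbound (hF.mono hball) ?_
    simp only [add_sub_cancel_left, sub_sub_cancel, max_self, NNReal.coe_zero, sub_zero]
    calc (L : ℝ) * ε ≤ (L + 1) * ε := by gcongr; linarith
      _ = a := mul_div_cancel₀ _ (by positivity)
  obtain ⟨Z, hZ₀, hZ⟩ := hPL.exists_eq_forall_mem_Icc_hasDerivWithinAt₀
  have hZderiv : ∀ t ∈ Ioo (t₀ - ε) (t₀ + ε), HasDerivAt Z (F (Z t)) t := fun t ht =>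
    (hZ t (Ioo_subset_Icc_self ht)).hasDerivAt (Icc_mem_nhds ht.1 ht.2)
  obtain ⟨δ, hδ, hZU⟩ := Metric.mem_nhds_iff.1 <|
    (hZderiv t₀ ⟨by linarith, by linarith⟩).continuousAt.preimage_mem_nhds
      (hU.mem_nhds (hZ₀ ▸ hx₀))
  refine ⟨Z, hZ₀, min ε δ, lt_min hε hδ, fun t ht => ⟨hZU ?_, hZderiv t ?_⟩⟩
  · rw [mem_ball, Real.dist_eq, abs_sub_lt_iff]
    constructor <;> linarith [ht.1, ht.2, min_le_right ε δ]
  · constructor <;> linarith [ht.1, ht.2, min_le_left ε δ]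

namespace SolvesODE

variable {F : E → E} {U : Set E} {X : ℝ → E} {a b : ℝ}

theorem comp_neg {s : Set ℝ} (hX : SolvesODE F U X s) :
    SolvesODE (-F) U (fun t => X (-t)) (-s) := fun t ht => by
  refine ⟨(hX (-t) ht).1, ?_⟩
  simpa [Function.comp_def] using (hX (-t) ht).2.scomp t (hasDerivAt_neg t)

theorem piecewise_Iio {Z : ℝ → E} {c d : ℝ} {p : E} (hX : SolvesODE F U X (Ioo a b))
    (hab : a < b) (hXp : Tendsto X (𝓝[<] b) (𝓝 p)) (hF : ContinuousAt F p)
    (hZ : SolvesODE F U Z (Ioo d c)) (hb : b ∈ Ioo d c) (hZb : Z b = p) :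
    SolvesODE F U (fun t => if t < b then X t else Z t) (Ioo a c) := by
  set Y : ℝ → E := fun t => if t < b then X t else Z t
  have hYX : ∀ t < b, Y =ᶠ[𝓝 t] X := fun t ht =>
    eventuallyEq_of_mem (Iio_mem_nhds ht) fun s hs => if_pos hs
  have hYZ : ∀ t > b, Y =ᶠ[𝓝 t] Z := fun t ht =>
    eventuallyEq_of_mem (Ioi_mem_nhds ht) fun s hs => if_neg (not_lt.2 (le_of_lt hs))
  have hYb : Y b = p := by simp [Y, hZb]
  have hleft : HasDerivWithinAt Y (F p) (Iic b) b := by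
    refine hasDerivWithinAt_Iic_of_tendsto_deriv (s := Ioo a b)
      (fun t ht => ((hX t ht).2.congr_of_eventuallyEq (hYX t ht.2)).differentiableAt
        |>.differentiableWithinAt) ?_ (Ioo_mem_nhdsLT hab) ?_
    · rw [ContinuousWithinAt, nhdsWithin_Ioo_eq_nhdsLT hab, hYb]
      exact hXp.congr' (eventuallyEq_of_mem self_mem_nhdsWithin fun t ht => (if_pos ht).symm)
    · refine ((hF.tendsto.comp hXp).congr' ?_)
      filter_upwards [Ioo_mem_nhdsLT hab] with t ht
      exact ((hX t ht).2.congr_of_eventuallyEq (hYX t ht.2)).deriv.symm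
  have hright : HasDerivWithinAt Y (F p) (Ici b) b := by
    exact ((hZ b hb).2.hasDerivWithinAt.congr (fun t (ht : b ≤ t) => if_neg (not_lt.2 ht))
      (if_neg (lt_irrefl b))).congr_deriv (by rw [hZb])
  intro t ht
  rcases lt_trichotomy t b with htb | rfl | htb
  · rw [show Y t = X t from if_pos htb, (hYX t htb).hasDerivAt_iff]
    exact hX t ⟨ht.1, htb⟩
  · refine ⟨hYb ▸ hZb ▸ (hZ t hb).1, hYb ▸ ?_⟩
    simpa [Iic_union_Ici] using hleft.union hright
  · rw [show Y t = Z t from if_neg (not_lt.2 htb.le), (hYZ t htb).hasDerivAt_iff]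
    exact hZ t ⟨hb.1.trans htb, ht.2⟩

theorem lipschitzOnWith {s : Set ℝ} {C : NNReal} (hX : SolvesODE F U X s) (hs : Convex ℝ s)
    (hF : ∀ x ∈ U, ‖F x‖₊ ≤ C) : LipschitzOnWith C X s :=
  hs.lipschitzOnWith_of_nnnorm_hasDerivWithin_le (fun t ht => (hX t ht).2.hasDerivWithinAt)
    fun t ht => hF _ (hX t ht).1

theorem strictMonoOn_comp {s : Set ℝ} (hX : SolvesODE F U X s) (hs : Convex ℝ s)
    (φ : E →L[ℝ] ℝ) (hφ : ∀ x ∈ U, 0 < φ (F x)) : StrictMonoOn (fun t => φ (X t)) s :=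
  strictMonoOn_of_hasDerivWithinAt_pos hs
    (fun t ht => (φ.continuous.continuousAt.comp (hX t ht).2.continuousAt).continuousWithinAt)
    (fun t ht => (φ.hasFDerivAt.comp_hasDerivAt t (hX t (interior_subset ht)).2).hasDerivWithinAt)
    fun t ht => hφ _ (hX t (interior_subset ht)).1

variable [CompleteSpace E]

theorem exists_tendsto_nhdsLT {C : NNReal} (hX : SolvesODE F U X (Ioo a b)) (hab : a < b)
    (hF : ∀ x ∈ U, ‖F x‖₊ ≤ C) : ∃ p, Tendsto X (𝓝[<] b) (𝓝 p) := by
  simpa [nhdsWithin_Ioo_eq_nhdsLT hab] using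
    ((hX.lipschitzOnWith (convex_Ioo a b) hF).uniformContinuousOn).exists_tendsto_nhdsWithin
      (a := b) (by simp [closure_Ioo hab.ne, hab.le])

theorem exists_tendsto_nhdsGT {C : NNReal} (hX : SolvesODE F U X (Ioo a b)) (hab : a < b)
    (hF : ∀ x ∈ U, ‖F x‖₊ ≤ C) : ∃ q, Tendsto X (𝓝[>] a) (𝓝 q) := by
  simpa [nhdsWithin_Ioo_eq_nhdsGT hab] using
    ((hX.lipschitzOnWith (convex_Ioo a b) hF).uniformContinuousOn).exists_tendsto_nhdsWithin
      (a := a) (by simp [closure_Ioo hab.ne, hab.le])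

variable {K : NNReal}

theorem exists_extension_right (hU : IsOpen U) (hF : LipschitzOnWith K F U)
    (hX : SolvesODE F U X (Ioo a b)) (hab : a < b) {p : E} (hXp : Tendsto X (𝓝[<] b) (𝓝 p))
    (hp : p ∈ U) : ∃ c > b, ∃ Y, SolvesODE F U Y (Ioo a c) ∧ EqOn Y X (Ioo a b) := by
  obtain ⟨Z, hZb, ε, hε, hZ⟩ := exists_solvesODE_of_lipschitzOnWith hU hF hp b
  refine ⟨b + ε, by linarith, _, hX.piecewise_Iio hab hXp
    (hF.continuousOn.continuousAt (hU.mem_nhds hp)) hZ ⟨by linarith, by linarith⟩ hZb,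
    fun t ht => if_pos ht.2⟩

theorem exists_extension_left (hU : IsOpen U) (hF : LipschitzOnWith K F U)
    (hX : SolvesODE F U X (Ioo a b)) (hab : a < b) {q : E} (hXq : Tendsto X (𝓝[>] a) (𝓝 q))
    (hq : q ∈ U) : ∃ c < a, ∃ Y, SolvesODE F U Y (Ioo c b) ∧ EqOn Y X (Ioo a b) := by
  have hX' := hX.comp_neg
  rw [neg_Ioo] at hX'
  obtain ⟨c, hc, Y, hY, hYX⟩ := hX'.exists_extension_right hU hF.neg (neg_lt_neg hab)
    (hXq.comp (by simpa using tendsto_neg_nhdsLT (a := -a))) hq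
  refine ⟨-c, by linarith, fun t => Y (-t), by simpa [neg_Ioo] using hY.comp_neg, fun t ht => ?_⟩
  simpa using hYX (show -t ∈ Ioo (-b) (-a) from ⟨by linarith [ht.2], by linarith [ht.1]⟩)

theorem mem_frontier_of_tendsto_nhdsLT (hU : IsOpen U) (hF : LipschitzOnWith K F U)
    (hX : SolvesODE F U X (Ioo a b)) (hab : a < b) {p : E} (hXp : Tendsto X (𝓝[<] b) (𝓝 p))
    (hmax : ∀ c Y, b < c → SolvesODE F U Y (Ioo a c) → EqOn Y X (Ioo a b) → False) :
    p ∈ frontier U := by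
  rw [hU.frontier_eq]
  refine ⟨mem_closure_of_tendsto hXp <|
    mem_of_superset (Ioo_mem_nhdsLT hab) fun t ht => (hX t ht).1, fun hp => ?_⟩
  obtain ⟨c, hc, Y, hY, hYX⟩ := hX.exists_extension_right hU hF hab hXp hp
  exact hmax c Y hc hY hYX

theorem mem_frontier_of_tendsto_nhdsGT (hU : IsOpen U) (hF : LipschitzOnWith K F U)
    (hX : SolvesODE F U X (Ioo a b)) (hab : a < b) {q : E} (hXq : Tendsto X (𝓝[>] a) (𝓝 q))
    (hmax : ∀ c Y, c < a → SolvesODE F U Y (Ioo c b) → EqOn Y X (Ioo a b) → False) :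
    q ∈ frontier U := by
  rw [hU.frontier_eq]
  refine ⟨mem_closure_of_tendsto hXq <|
    mem_of_superset (Ioo_mem_nhdsGT hab) fun t ht => (hX t ht).1, fun hq => ?_⟩
  obtain ⟨c, hc, Y, hY, hYX⟩ := hX.exists_extension_left hU hF hab hXq hq
  exact hmax c Y hc hY hYX

end SolvesODE

theorem stmt_17_general (Ω : Set (ℝ × ℝ)) (hΩo : IsOpen Ω)
    (H : ℝ × ℝ → ℝ × ℝ) (K : NNReal) (hHlip : LipschitzOnWith K H (closure Ω))
    (hm hM : ℝ) (hm_pos : 0 < hm)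
    (hH : ∀ x ∈ Ω, |(H x).1| ≤ hM ∧ hm ≤ (H x).2 ∧ (H x).2 ≤ hM)
    (w h : ℝ) (αm αp : ℝ) (X : ℝ → ℝ × ℝ)
    (hαm : αm < 0) (hαp : 0 < αp)
    (hinit : X 0 = (w, h))
    (hODE : ∀ t ∈ Set.Ioo αm αp, X t ∈ Ω ∧ HasDerivAt X (H (X t)) t)
    (hmaxp : ∀ (b : ℝ) (Y : ℝ → ℝ × ℝ), αp < b →
      (∀ t ∈ Set.Ioo αm b, Y t ∈ Ω ∧ HasDerivAt Y (H (Y t)) t) →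
      (∀ t ∈ Set.Ioo αm αp, Y t = X t) → False)
    (hmaxm : ∀ (c : ℝ) (Y : ℝ → ℝ × ℝ), c < αm →
      (∀ t ∈ Set.Ioo c αp, Y t ∈ Ω ∧ HasDerivAt Y (H (Y t)) t) →
      (∀ t ∈ Set.Ioo αm αp, Y t = X t) → False) :
    (∃ p : ℝ × ℝ, Filter.Tendsto X (nhdsWithin αp (Set.Iio αp)) (nhds p) ∧
      p ∈ frontier Ω ∧ h < p.2) ∧
    (∃ q : ℝ × ℝ, Filter.Tendsto X (nhdsWithin αm (Set.Ioi αm)) (nhds q) ∧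
      q ∈ frontier Ω ∧ q.2 < h) := by
  have hX : SolvesODE H Ω X (Ioo αm αp) := hODE
  have hlt : αm < αp := hαm.trans hαp
  have hHΩ : LipschitzOnWith K H Ω := hHlip.mono subset_closure
  have hbound : ∀ x ∈ Ω, ‖H x‖₊ ≤ hM.toNNReal := fun x hx => by
    obtain ⟨h₁, h₂, h₂'⟩ := hH x hx
    rw [← NNReal.coe_le_coe, coe_nnnorm, Real.coe_toNNReal _ (hm_pos.le.trans (h₂.trans h₂')),
      Prod.norm_def]
    exact max_le h₁ (abs_le.2 ⟨by linarith, h₂'⟩)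
  have hmono : StrictMonoOn (fun t => (X t).2) (Ioo αm αp) :=
    hX.strictMonoOn_comp (convex_Ioo αm αp) (.snd ℝ ℝ ℝ) fun x hx => hm_pos.trans_le (hH x hx).2.1
  have h0 : (0 : ℝ) ∈ Ioo αm αp := ⟨hαm, hαp⟩
  obtain ⟨p, hp⟩ := hX.exists_tendsto_nhdsLT hlt hbound
  obtain ⟨q, hq⟩ := hX.exists_tendsto_nhdsGT hlt hbound
  refine ⟨⟨p, hp, hX.mem_frontier_of_tendsto_nhdsLT hΩo hHΩ hlt hp hmaxp, ?_⟩,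
    ⟨q, hq, hX.mem_frontier_of_tendsto_nhdsGT hΩo hHΩ hlt hq hmaxm, ?_⟩⟩
  · simpa [hinit] using hmono.lt_of_tendsto_nhdsLT h0 hp.snd_nhds
  · simpa [hinit] using hmono.lt_of_tendsto_nhdsGT h0 hq.snd_nhds

/-- Limits of maximal orbits: for the maximal solution `X` of `X' = H(X)`,
`X 0 = (w,h)` in the bounded open set `Ω`, with `H` Lipschitz, `|H₁| ≤ hM`,
`0 < hm ≤ H₂ ≤ hM`, the limits of `X` at the endpoints `αp` and `αm` of the maximal
interval exist and belong to `∂Ω ∩ {x₂ > h}` and `∂Ω ∩ {x₂ < h}` respectively. -/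
theorem stmt_17 (Ω : Set (ℝ × ℝ)) (hΩo : IsOpen Ω) (hΩb : Bornology.IsBounded Ω)
    (H : ℝ × ℝ → ℝ × ℝ) (K : NNReal) (hHlip : LipschitzOnWith K H (closure Ω))
    (hm hM : ℝ) (hm_pos : 0 < hm)
    (hH : ∀ x ∈ Ω, |(H x).1| ≤ hM ∧ hm ≤ (H x).2 ∧ (H x).2 ≤ hM)
    (w h : ℝ) (αm αp : ℝ) (X : ℝ → ℝ × ℝ)
    (hαm : αm < 0) (hαp : 0 < αp)
    (hinit : X 0 = (w, h)) (hwh : (w, h) ∈ Ω)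
    (hODE : ∀ t ∈ Set.Ioo αm αp, X t ∈ Ω ∧ HasDerivAt X (H (X t)) t)
    (hmaxp : ∀ (b : ℝ) (Y : ℝ → ℝ × ℝ), αp < b →
      (∀ t ∈ Set.Ioo αm b, Y t ∈ Ω ∧ HasDerivAt Y (H (Y t)) t) →
      (∀ t ∈ Set.Ioo αm αp, Y t = X t) → False)
    (hmaxm : ∀ (c : ℝ) (Y : ℝ → ℝ × ℝ), c < αm →
      (∀ t ∈ Set.Ioo c αp, Y t ∈ Ω ∧ HasDerivAt Y (H (Y t)) t) →
      (∀ t ∈ Set.Ioo αm αp, Y t = X t) → False) :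
    (∃ p : ℝ × ℝ, Filter.Tendsto X (nhdsWithin αp (Set.Iio αp)) (nhds p) ∧
      p ∈ frontier Ω ∧ h < p.2) ∧
    (∃ q : ℝ × ℝ, Filter.Tendsto X (nhdsWithin αm (Set.Ioi αm)) (nhds q) ∧
      q ∈ frontier Ω ∧ q.2 < h) :=
  stmt_17_general Ω hΩo H K hHlip hm hM hm_pos hH w h αm αp X hαm hαp hinit hODE hmaxp hmaxm
end
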